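/- PCS[O] \ PCS[T] ≠ ∅; that is, there is an indexed family that is PCS[O]-learnable but not PCS[T]-learnable. -/

import Mathlib

/-!
Common framework: indexed families of c.e. sets, enumerations (texts),
learning machines with run-time, membership-oracle machines, teachers,
and the learning criteria PRT/PSD/PMC/PCS with oracle/teacher variants.
-/

namespace TeachLearn

attribute [local instance] Classical.propDecidable

/-- The initial segment (finite string) of length `n` of the infinite sequence `f`. -/
def str (f : ℕ → ℕ) (n : ℕ) : List ℕ := (List.range n).map f

/-- `f` is an enumeration (a text) of the set `A`: its set of values is exactly `A`. -/
def IsEnum (f : ℕ → ℕ) (A : Set ℕ) : Prop := Set.range f = A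

/-- An indexed family: a uniformly computably enumerable sequence of nonempty
subsets of `ℕ`. -/
structure IndexedFamily where
  F : ℕ → Set ℕ
  nonempty : ∀ n, (F n).Nonempty
  uce : REPred fun p : ℕ × ℕ => p.1 ∈ F p.2

namespace IndexedFamily

/-- `A` is a member of the indexed family `𝓕`. -/
def Mem (𝓕 : IndexedFamily) (A : Set ℕ) : Prop := ∃ n, 𝓕.F n = A

/-- The minimal index of `A` in the indexed family `𝓕`. -/
noncomputable def mi (𝓕 : IndexedFamily) (A : Set ℕ) : ℕ := sInf {n | 𝓕.F n = A}

end IndexedFamily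

/-- A learning machine: a partial computable map from finite strings to
hypotheses, together with a (cumulative) run-time function.  The run-time is
defined exactly when the machine halts, dominates the length of the input read
as well as the size of the output produced, and is monotone along prefixes
(time is accumulated while reading an enumeration). -/
structure Machine where
  eval : List ℕ →. ℕ
  partrec : Partrec eval
  time : List ℕ →. ℕ
  time_dom : ∀ σ, (time σ).Dom ↔ (eval σ).Dom
  length_le_time : ∀ ⦃σ t⦄, t ∈ time σ → σ.length ≤ t
  size_le_time : ∀ ⦃σ t h⦄, t ∈ time σ → h ∈ eval σ → Nat.size h ≤ t
  time_mono : ∀ ⦃σ τ s t⦄, σ <+: τ → s ∈ time σ → t ∈ time τ → s ≤ t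

/-- A teacher: a computable, prefix-monotone map on finite strings whose
output consists of elements of its input. -/
structure Teacher where
  t : List ℕ → List ℕ
  computable : Computable t
  mono : ∀ ⦃σ τ⦄, σ <+: τ → t σ <+: t τ
  content_sub : ∀ ⦃σ x⦄, x ∈ t σ → x ∈ σ

/-- A learning machine with access to a membership oracle, modeled
interactively: `step (σ, ans)` is the machine's action on input string `σ`
after having received the list `ans` of oracle answers so far; an even value
`2 * q` asks the oracle whether `q` belongs to the target, while an odd value
`2 * h + 1` halts the interaction with hypothesis `h`.  The run-time dominates
the length of the input read, the number of oracle queries asked, and the size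
of the value produced, and is monotone (cumulative). -/
structure OMachine where
  step : List ℕ × List Bool →. ℕ
  partrec : Partrec step
  time : List ℕ × List Bool →. ℕ
  time_dom : ∀ x, (time x).Dom ↔ (step x).Dom
  length_le_time : ∀ ⦃x t⦄, t ∈ time x → x.1.length ≤ t
  queries_le_time : ∀ ⦃x t⦄, t ∈ time x → x.2.length ≤ t
  size_le_time : ∀ ⦃x t v⦄, t ∈ time x → v ∈ step x → Nat.size v ≤ t
  time_mono : ∀ ⦃σ τ a b s t⦄, σ <+: τ → a <+: b →
    s ∈ time (σ, a) → t ∈ time (τ, b) → s ≤ t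

namespace OMachine

/-- The answer lists reachable in the interaction of the machine `M` with the
membership oracle for `A` on the input string `σ`. -/
inductive Reach (M : OMachine) (A : Set ℕ) (σ : List ℕ) : List Bool → Prop
  | nil : Reach M A σ []
  | query {ans q} : Reach M A σ ans → (2 * q) ∈ M.step (σ, ans) →
      Reach M A σ (ans ++ [decide (q ∈ A)])

/-- `M.Out A σ h ans`: on input `σ`, interacting with the membership oracle
for `A`, the machine `M` receives the oracle answers `ans` and halts with
hypothesis `h`. -/
def Out (M : OMachine) (A : Set ℕ) (σ : List ℕ) (h : ℕ) (ans : List Bool) : Prop :=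
  M.Reach A σ ans ∧ (2 * h + 1) ∈ M.step (σ, ans)

/-- With oracle `A`, on the stage inputs `I`, the machine `M` outputs the
hypothesis `h` from stage `n` onwards. -/
def Settles (M : OMachine) (A : Set ℕ) (I : ℕ → List ℕ) (h n : ℕ) : Prop :=
  ∀ m, n ≤ m → ∃ ans, M.Out A (I m) h ans

end OMachine

/-- A teacher for the teacher-and-oracle model: it additionally has access to
the oracle answers received so far by the learner. -/
structure OTeacher where
  t : List ℕ → List Bool → List ℕ
  computable : Computable₂ t
  mono : ∀ ⦃σ τ a b⦄, σ <+: τ → a <+: b → t σ a <+: t τ b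
  content_sub : ∀ ⦃σ a x⦄, x ∈ t σ a → x ∈ σ

/-- On the stage inputs `I`, the machine `M` outputs the hypothesis `h` from
stage `n` onwards. -/
def Machine.Settles (M : Machine) (I : ℕ → List ℕ) (h n : ℕ) : Prop :=
  ∀ m, n ≤ m → M.eval (I m) = Part.some h

/-- Settling for the teacher-and-oracle model: `hist m` records the oracle
answers the learner received at stage `m - 1`, which the teacher sees at
stage `m`.  From stage `n` on, the learner outputs `h`. -/
def OMachine.TOSettles (M : OMachine) (T : OTeacher) (A : Set ℕ) (f : ℕ → ℕ)
    (hist : ℕ → List Bool) (h n : ℕ) : Prop :=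
  ∀ m, n ≤ m → M.Out A (T.t (str f m) (hist m)) h (hist (m + 1))

/-! ### Polynomial run-time (PRT) -/

/-- `M` converges to the hypothesis `h` on the stage inputs `I` within fewer
than `B` computation steps. -/
def Machine.PRTIdentifies (M : Machine) (I : ℕ → List ℕ) (h B : ℕ) : Prop :=
  ∃ n, M.Settles I h n ∧ ∃ t, t ∈ M.time (I n) ∧ t < B

/-- Oracle version of `Machine.PRTIdentifies`; the run-time bound also bounds
the oracle use (by `queries_le_time`). -/
def OMachine.PRTIdentifies (M : OMachine) (A : Set ℕ) (I : ℕ → List ℕ) (h B : ℕ) : Prop :=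
  ∃ n, M.Settles A I h n ∧
    ∃ ans t, M.Out A (I n) h ans ∧ t ∈ M.time (I n, ans) ∧ t < B

/-- `M` PRT-learns `𝓕` with polynomial bound `p`. -/
def PRTLearnsWith (M : Machine) (p : Polynomial ℕ) (𝓕 : IndexedFamily) : Prop :=
  ∀ A, 𝓕.Mem A → ∀ f, IsEnum f A →
    ∃ h, 𝓕.F h = A ∧ M.PRTIdentifies (str f) h (p.eval (𝓕.mi A))

/-- `𝓕` is PRT-learnable. -/
def PRT (𝓕 : IndexedFamily) : Prop := ∃ M p, PRTLearnsWith M p 𝓕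

/-- The learner-teacher pair `(M, T)` PRT-learns `𝓕` with polynomial bound `p`. -/
def PRTTLearnsWith (M : Machine) (T : Teacher) (p : Polynomial ℕ) (𝓕 : IndexedFamily) : Prop :=
  ∀ A, 𝓕.Mem A → ∀ f, IsEnum f A →
    ∃ h, 𝓕.F h = A ∧ M.PRTIdentifies (fun m => T.t (str f m)) h (p.eval (𝓕.mi A))

/-- `𝓕` is PRT[T]-learnable. -/
def PRTT (𝓕 : IndexedFamily) : Prop := ∃ M T p, PRTTLearnsWith M T p 𝓕

/-- `𝓕` is PRT[O]-learnable. -/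
def PRTO (𝓕 : IndexedFamily) : Prop :=
  ∃ (M : OMachine) (p : Polynomial ℕ), ∀ A, 𝓕.Mem A → ∀ f, IsEnum f A →
    ∃ h, 𝓕.F h = A ∧ M.PRTIdentifies A (str f) h (p.eval (𝓕.mi A))

/-- `𝓕` is PRT[T,O]-learnable. -/
def PRTTO (𝓕 : IndexedFamily) : Prop :=
  ∃ (M : OMachine) (T : OTeacher) (p : Polynomial ℕ),
    ∀ A, 𝓕.Mem A → ∀ f, IsEnum f A →
      ∃ h, 𝓕.F h = A ∧ ∃ hist : ℕ → List Bool, hist 0 = [] ∧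
        ∃ n, M.TOSettles T A f hist h n ∧
          ∃ t, t ∈ M.time (T.t (str f n) (hist n), hist (n + 1)) ∧ t < p.eval (𝓕.mi A)

/-! ### Polynomial size dataset (PSD) -/

/-- `M` converges to `h` on an initial stage whose input contains fewer than
`B` distinct elements. -/
def Machine.PSDIdentifies (M : Machine) (I : ℕ → List ℕ) (h B : ℕ) : Prop :=
  ∃ n, M.Settles I h n ∧ (I n).toFinset.card < B

/-- Oracle version of `Machine.PSDIdentifies`; the oracle use is also bounded. -/
def OMachine.PSDIdentifies (M : OMachine) (A : Set ℕ) (I : ℕ → List ℕ) (h B : ℕ) : Prop :=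
  ∃ n, M.Settles A I h n ∧ (I n).toFinset.card < B ∧
    ∃ ans, M.Out A (I n) h ans ∧ ans.length ≤ B

/-- `𝓕` is PSD-learnable. -/
def PSD (𝓕 : IndexedFamily) : Prop :=
  ∃ (M : Machine) (p : Polynomial ℕ), ∀ A, 𝓕.Mem A → ∀ f, IsEnum f A →
    ∃ h, 𝓕.F h = A ∧ M.PSDIdentifies (str f) h (p.eval (𝓕.mi A))

/-- `𝓕` is PSD[T]-learnable. -/
def PSDT (𝓕 : IndexedFamily) : Prop :=
  ∃ (M : Machine) (T : Teacher) (p : Polynomial ℕ), ∀ A, 𝓕.Mem A → ∀ f, IsEnum f A →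
    ∃ h, 𝓕.F h = A ∧ M.PSDIdentifies (fun m => T.t (str f m)) h (p.eval (𝓕.mi A))

/-- `𝓕` is PSD[O]-learnable. -/
def PSDO (𝓕 : IndexedFamily) : Prop :=
  ∃ (M : OMachine) (p : Polynomial ℕ), ∀ A, 𝓕.Mem A → ∀ f, IsEnum f A →
    ∃ h, 𝓕.F h = A ∧ M.PSDIdentifies A (str f) h (p.eval (𝓕.mi A))

/-- `𝓕` is PSD[T,O]-learnable. -/
def PSDTO (𝓕 : IndexedFamily) : Prop :=
  ∃ (M : OMachine) (T : OTeacher) (p : Polynomial ℕ),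
    ∀ A, 𝓕.Mem A → ∀ f, IsEnum f A →
      ∃ h, 𝓕.F h = A ∧ ∃ hist : ℕ → List Bool, hist 0 = [] ∧
        ∃ n, M.TOSettles T A f hist h n ∧
          (T.t (str f n) (hist n)).toFinset.card < p.eval (𝓕.mi A) ∧
          (hist (n + 1)).length ≤ p.eval (𝓕.mi A)

/-! ### Polynomial mind-changes (PMC) -/

/-- The set of positions at which the hypothesis stream `g` changes its mind. -/
def MindChanges (g : ℕ → ℕ) : Set ℕ := {i | g i ≠ g (i + 1)}

/-- The hypothesis stream `g` changes its mind at most `B` times, and the only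
hypothesis appearing infinitely often in it is an index of `A` in `𝓕`. -/
def PMCCriterion (𝓕 : IndexedFamily) (A : Set ℕ) (g : ℕ → ℕ) (B : ℕ) : Prop :=
  (MindChanges g).Finite ∧ (MindChanges g).ncard ≤ B ∧
    ∀ h, {i | g i = h}.Infinite → 𝓕.F h = A

/-- `𝓕` is PMC-learnable. -/
def PMC (𝓕 : IndexedFamily) : Prop :=
  ∃ (M : Machine) (p : Polynomial ℕ), ∀ A, 𝓕.Mem A → ∀ f, IsEnum f A →
    ∃ g : ℕ → ℕ, (∀ m, M.eval (str f m) = Part.some (g m)) ∧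
      PMCCriterion 𝓕 A g (p.eval (𝓕.mi A))

/-- `𝓕` is PMC[T]-learnable. -/
def PMCT (𝓕 : IndexedFamily) : Prop :=
  ∃ (M : Machine) (T : Teacher) (p : Polynomial ℕ), ∀ A, 𝓕.Mem A → ∀ f, IsEnum f A →
    ∃ g : ℕ → ℕ, (∀ m, M.eval (T.t (str f m)) = Part.some (g m)) ∧
      PMCCriterion 𝓕 A g (p.eval (𝓕.mi A))

/-- `𝓕` is PMC[O]-learnable. -/
def PMCO (𝓕 : IndexedFamily) : Prop :=
  ∃ (M : OMachine) (p : Polynomial ℕ), ∀ A, 𝓕.Mem A → ∀ f, IsEnum f A →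
    ∃ g : ℕ → ℕ,
      (∀ m, ∃ ans, M.Out A (str f m) (g m) ans ∧ ans.length ≤ p.eval (𝓕.mi A)) ∧
      PMCCriterion 𝓕 A g (p.eval (𝓕.mi A))

/-- `𝓕` is PMC[T,O]-learnable. -/
def PMCTO (𝓕 : IndexedFamily) : Prop :=
  ∃ (M : OMachine) (T : OTeacher) (p : Polynomial ℕ),
    ∀ A, 𝓕.Mem A → ∀ f, IsEnum f A →
      ∃ hist : ℕ → List Bool, hist 0 = [] ∧
        ∃ g : ℕ → ℕ,
          (∀ m, M.Out A (T.t (str f m) (hist m)) (g m) (hist (m + 1)) ∧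
            (hist (m + 1)).length ≤ p.eval (𝓕.mi A)) ∧
          PMCCriterion 𝓕 A g (p.eval (𝓕.mi A))

/-! ### Polynomial size characteristic sample (PCS) -/

/-- `𝓕` is PCS-learnable: there are a machine, a polynomial bound and an
assignment of a characteristic sample to each member of `𝓕`. -/
def PCS (𝓕 : IndexedFamily) : Prop :=
  ∃ (M : Machine) (p : Polynomial ℕ) (S : Set ℕ → Finset ℕ),
    ∀ A, 𝓕.Mem A → ↑(S A) ⊆ A ∧ (S A).card < p.eval (𝓕.mi A) ∧
      ∃ e, 𝓕.F e = A ∧ ∀ f, IsEnum f A → ∀ n, (∀ x ∈ S A, x ∈ str f n) →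
        M.eval (str f n) = Part.some e

/-- `𝓕` is PCS[O]-learnable. -/
def PCSO (𝓕 : IndexedFamily) : Prop :=
  ∃ (M : OMachine) (p : Polynomial ℕ) (S : Set ℕ → Finset ℕ),
    ∀ A, 𝓕.Mem A → ↑(S A) ⊆ A ∧ (S A).card < p.eval (𝓕.mi A) ∧
      ∃ e, 𝓕.F e = A ∧ ∀ f, IsEnum f A → ∀ n, (∀ x ∈ S A, x ∈ str f n) →
        ∃ ans, M.Out A (str f n) e ans ∧ ans.length ≤ p.eval (𝓕.mi A)

/-- `𝓕` is PCS[T]-learnable: the characteristic sample must eventually appear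
in the teacher's output stream, after which the learner locks onto a correct
index. -/
def PCST (𝓕 : IndexedFamily) : Prop :=
  ∃ (M : Machine) (T : Teacher) (p : Polynomial ℕ) (S : Set ℕ → Finset ℕ),
    ∀ A, 𝓕.Mem A → ↑(S A) ⊆ A ∧ (S A).card < p.eval (𝓕.mi A) ∧
      ∃ e, 𝓕.F e = A ∧ ∀ f, IsEnum f A →
        (∃ n, ∀ x ∈ S A, x ∈ T.t (str f n)) ∧
        ∀ n, (∀ x ∈ S A, x ∈ T.t (str f n)) → M.eval (T.t (str f n)) = Part.some e

/-- `𝓕` is PCS[T,O]-learnable. -/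
def PCSTO (𝓕 : IndexedFamily) : Prop :=
  ∃ (M : OMachine) (T : OTeacher) (p : Polynomial ℕ) (S : Set ℕ → Finset ℕ),
    ∀ A, 𝓕.Mem A → ↑(S A) ⊆ A ∧ (S A).card < p.eval (𝓕.mi A) ∧
      ∃ e, 𝓕.F e = A ∧ ∀ f, IsEnum f A →
        ∃ hist : ℕ → List Bool, hist 0 = [] ∧
          (∃ n, ∀ x ∈ S A, x ∈ T.t (str f n) (hist n)) ∧
          ∀ n, (∀ x ∈ S A, x ∈ T.t (str f n) (hist n)) →
            M.Out A (T.t (str f n) (hist n)) e (hist (n + 1)) ∧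
            (hist (n + 1)).length ≤ p.eval (𝓕.mi A)


/-!
The family consists of `ℕ` and its initial segments `{0, …, k}`. A learner with a membership
oracle tells them apart with a single query: after seeing the maximum `k` of the data it asks
whether `k + 1` belongs to the target, so `{k}` is a characteristic sample of `{0, …, k}`, and on
`ℕ` the answer is correct whatever the data. A teacher cannot replace the oracle, because `ℕ` is
a limit of the segments: once the sample of `ℕ` has been shown on some prefix of a text of `ℕ`,
that prefix continues to a text of a segment containing it, whose sample is shown at a later
stage `m`; the data seen up to `m` continue to a text of `ℕ` as well, so the learner outputs the
same index for `ℕ` and for the segment.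
-/

def prepend (σ : List ℕ) (f : ℕ → ℕ) (i : ℕ) : ℕ :=
  if h : i < σ.length then σ[i] else f (i - σ.length)

theorem length_str (f : ℕ → ℕ) (n : ℕ) : (str f n).length = n := by
  simp [str]

theorem str_prefix_str (f : ℕ → ℕ) {n m : ℕ} (h : n ≤ m) : str f n <+: str f m :=
  (List.prefix_iff_eq_take.2 (by simp [List.take_range, h])).map f

theorem str_prepend_length (σ : List ℕ) (f : ℕ → ℕ) : str (prepend σ f) σ.length = σ :=
  List.ext_getElem (length_str _ _) fun i _ hi => by simp [str, prepend, hi]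

theorem mem_of_mem_str {f : ℕ → ℕ} {A : Set ℕ} (hf : IsEnum f A) {x n : ℕ}
    (hx : x ∈ str f n) : x ∈ A := by
  obtain ⟨i, -, rfl⟩ := List.mem_map.1 hx
  exact hf ▸ Set.mem_range_self i

theorem isEnum_prepend {f : ℕ → ℕ} {A : Set ℕ} (hf : IsEnum f A) {σ : List ℕ}
    (hσ : ∀ x ∈ σ, x ∈ A) : IsEnum (prepend σ f) A := by
  refine Set.Subset.antisymm ?_ fun x hx => ?_
  · rintro _ ⟨i, rfl⟩
    unfold prepend
    split_ifs with hi
    · exact hσ _ (List.getElem_mem hi)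
    · exact hf ▸ Set.mem_range_self _
  · obtain ⟨j, rfl⟩ := hf ▸ hx
    exact ⟨σ.length + j, by simp [prepend]⟩

theorem exists_isEnum {A : Set ℕ} (hA : A.Nonempty) : ∃ f, IsEnum f A := by
  obtain ⟨a, ha⟩ := hA
  refine ⟨fun i => if i ∈ A then i else a,
    Set.Subset.antisymm ?_ fun x hx => ⟨x, if_pos hx⟩⟩
  rintro _ ⟨i, rfl⟩
  dsimp only
  split_ifs with hi <;> assumption

namespace IndexedFamily

theorem Mem.nonempty {𝓕 : IndexedFamily} {A : Set ℕ} (h : 𝓕.Mem A) : A.Nonempty := by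
  obtain ⟨n, rfl⟩ := h
  exact 𝓕.nonempty n

/-- Gold's obstruction to identification from text: `U` is approximated from below by members
of `𝓕` on every finite subset. -/
def IsLimit (𝓕 : IndexedFamily) (U : Set ℕ) : Prop :=
  ∀ D : Finset ℕ, ↑D ⊆ U → ∃ A, 𝓕.Mem A ∧ ↑D ⊆ A ∧ A ⊂ U

end IndexedFamily

theorem not_pcst_of_isLimit {𝓕 : IndexedFamily} {U : Set ℕ} (hU : 𝓕.Mem U)
    (hlim : 𝓕.IsLimit U) : ¬ PCST 𝓕 := by
  rintro ⟨M, T, _, S, hP⟩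
  obtain ⟨-, -, eU, heU, learnU⟩ := hP U hU
  obtain ⟨f, hf⟩ := exists_isEnum hU.nonempty
  obtain ⟨N, hN⟩ := (learnU f hf).1
  obtain ⟨A, hA, hDA, hAU⟩ := hlim (str f N).toFinset fun x hx =>
    mem_of_mem_str hf (List.mem_toFinset.1 hx)
  obtain ⟨-, -, eA, heA, learnA⟩ := hP A hA
  obtain ⟨fA, hfA⟩ := exists_isEnum hA.nonempty
  set g := prepend (str f N) fA
  have hg : IsEnum g A := isEnum_prepend hfA fun x hx => hDA (List.mem_toFinset.2 hx)
  obtain ⟨n, hn⟩ := (learnA g hg).1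
  set m := max n N
  set h := prepend (str g m) f
  have hh : IsEnum h U := isEnum_prepend hf fun x hx => hAU.subset (mem_of_mem_str hg hx)
  have hgN : str g N = str f N := by
    simpa only [length_str] using str_prepend_length (str f N) fA
  have hhm : str h m = str g m := by
    simpa only [length_str] using str_prepend_length (str g m) f
  have coverU : ∀ x ∈ S U, x ∈ T.t (str h m) := fun x hx =>
    hhm ▸ (T.mono (hgN ▸ str_prefix_str g (le_max_right n N))).subset (hN x hx)
  have coverA : ∀ x ∈ S A, x ∈ T.t (str g m) := fun x hx =>
    (T.mono (str_prefix_str g (le_max_left n N))).subset (hn x hx)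
  have he : eU = eA := Part.some_inj.1 <|
    ((learnU h hh).2 m coverU).symm.trans (hhm ▸ (learnA g hg).2 m coverA)
  exact hAU.ne (heA.symm.trans (he ▸ heU))

def segments : IndexedFamily where
  F n := if n = 0 then Set.univ else Set.Iio n
  nonempty n := ⟨0, by split_ifs with h <;> simp [Nat.pos_of_ne_zero, h]⟩
  uce := by
    refine ComputablePred.to_re (ComputablePred.computable_iff.2
      ⟨fun p => p.2 == 0 || decide (p.1 < p.2), ?_, ?_⟩)
    · exact Primrec.to_comp <| Primrec.or.comp (Primrec.beq.comp .snd (.const 0))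
        (Primrec.nat_lt.comp .fst .snd).decide
    · ext ⟨x, n⟩
      by_cases h : n = 0 <;> simp [h]

theorem segments_F_succ (k : ℕ) : segments.F (k + 1) = Set.Iic k :=
  (if_neg (t := Set.univ) k.succ_ne_zero).trans (Set.Iio_add_one_eq_Iic k)

theorem segments_mem_univ : segments.Mem Set.univ := ⟨0, rfl⟩

theorem segments_mem_Iic (k : ℕ) : segments.Mem (Set.Iic k) := ⟨k + 1, segments_F_succ k⟩

theorem eq_univ_or_Iic_of_segments_mem {A : Set ℕ} (h : segments.Mem A) :
    A = Set.univ ∨ ∃ k, A = Set.Iic k := by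
  obtain ⟨_ | k, rfl⟩ := h
  · exact .inl rfl
  · exact .inr ⟨k, segments_F_succ k⟩

theorem segments_isLimit_univ : segments.IsLimit Set.univ := fun D _ =>
  ⟨_, segments_mem_Iic (D.sup id), fun _ hx => D.le_sup (f := id) hx,
    Set.ssubset_univ_iff.2 fun h => Nat.not_succ_le_self _ (Set.eq_univ_iff_forall.1 h _)⟩

/-- Ask whether `max σ + 1` lies in the target; answer `ℕ` (index `0`) if so and the
segment `{0, …, max σ}` (index `max σ + 1`) otherwise. -/
def segmentQuery : List ℕ × List Bool → ℕ
  | (σ, []) => 2 * (σ.foldr max ⊥ + 1)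
  | (σ, b :: _) => 2 * cond b 0 (σ.foldr max ⊥ + 1) + 1

theorem primrec_segmentQuery : Primrec segmentQuery := by
  have hmax : Primrec fun σ : List ℕ => σ.foldr max ⊥ :=
    Primrec.list_foldr .id (.const ⊥)
      (Primrec.nat_max.comp (Primrec.fst.comp .snd) (Primrec.snd.comp .snd)).to₂
  have hquery : Primrec fun x : List ℕ × List Bool => x.1.foldr max ⊥ + 1 :=
    Primrec.succ.comp (hmax.comp .fst)
  refine (Primrec.list_casesOn .snd (Primrec.nat_mul.comp (.const 2) hquery)
    (Primrec.succ.comp (Primrec.nat_mul.comp (.const 2)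
      (Primrec.cond (Primrec.fst.comp .snd) (.const 0) (hquery.comp .fst)))).to₂).of_eq ?_
  rintro ⟨σ, _ | ⟨b, ans⟩⟩ <;> rfl

theorem segmentQuery_le (x : List ℕ × List Bool) :
    segmentQuery x ≤ 2 * x.1.foldr max ⊥ + 3 := by
  rcases x with ⟨σ, _ | ⟨_ | _, ans⟩⟩ <;> simp [segmentQuery] <;> omega

def segmentLearner : OMachine where
  step x := Part.some (segmentQuery x)
  partrec := primrec_segmentQuery.to_comp.partrec
  time x := Part.some (x.1.length + x.2.length + 2 * x.1.foldr max ⊥ + 4)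
  time_dom _ := by simp
  length_le_time _ _ ht := by rw [Part.mem_some_iff.1 ht]; omega
  queries_le_time _ _ ht := by rw [Part.mem_some_iff.1 ht]; omega
  size_le_time x _ _ ht hv := by
    rw [Part.mem_some_iff.1 ht, Part.mem_some_iff.1 hv]
    grw [Nat.size_le.2 Nat.lt_two_pow_self, segmentQuery_le x]
    omega
  time_mono _ _ _ _ _ _ hστ hab hs ht := by
    rw [Part.mem_some_iff.1 hs, Part.mem_some_iff.1 ht]
    dsimp only
    have hmax := List.max_le_of_forall_le _ _ fun _ hx => List.le_max_of_le (hστ.subset hx) le_rfl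
    have hσ := hστ.length_le
    have ha := hab.length_le
    omega

theorem segmentLearner_out (A : Set ℕ) (σ : List ℕ) :
    segmentLearner.Out A σ (cond (decide (σ.foldr max ⊥ + 1 ∈ A)) 0 (σ.foldr max ⊥ + 1))
      [decide (σ.foldr max ⊥ + 1 ∈ A)] :=
  ⟨.query (ans := []) .nil (Part.mem_some _), Part.mem_some _⟩

theorem pcso_segments : PCSO segments := by
  refine ⟨segmentLearner, .C 2, fun A => {sSup A}, fun A hA => ?_⟩
  rcases eq_univ_or_Iic_of_segments_mem hA with rfl | ⟨k, rfl⟩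
  -- the sample `{sSup ℕ} = {0}` is a junk value, harmless since `ℕ` needs no sample
  · refine ⟨by simp, by simp, 0, rfl, fun f _ n _ => ⟨[true], ?_, by simp⟩⟩
    simpa using segmentLearner_out Set.univ (str f n)
  · refine ⟨by simp, by simp, k + 1, segments_F_succ k,
      fun f hf n hk => ⟨[false], ?_, by simp⟩⟩
    have hmax : (str f n).foldr max ⊥ = k :=
      le_antisymm (List.max_le_of_forall_le _ _ fun _ hx => mem_of_mem_str hf hx)
        (List.le_max_of_le (hk k (by simp)) le_rfl)
    have hout := segmentLearner_out (Set.Iic k) (str f n)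
    rw [hmax] at hout
    simpa using hout

/-- `PCS[O] \ PCS[T] ≠ ∅`. -/
theorem stmt14 : ∃ 𝓕 : IndexedFamily, PCSO 𝓕 ∧ ¬ PCST 𝓕 :=
  ⟨segments, pcso_segments, not_pcst_of_isLimit segments_mem_univ segments_isLimit_univ⟩

end TeachLearn
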